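/- arXiv:2111.03909 — 2 statements merged into one kernel-verified Lean document; each statement's English description precedes it below -/
import Mathlib

section
/- (Twisted Fischer–Koch configurations, positive center) For every integer k ≥ 4, the configuration consisting of k + 1 points, namely the origin 0 with charge +1 together with the k points √((k−3)/2) · e^{2πim/k}, m = 0, …, k−1, each with charge −1, is balanced. -/
/-- The force at a point of a configuration: `F j = conj (p j) + ∑_{k ≠ j} ε k / (p j - p k)`. -/
noncomputable def force {ι : Type*} [Fintype ι] [DecidableEq ι]
    (p ε : ι → ℂ) (j : ι) : ℂ :=
  (starRingEnd ℂ) (p j) + ∑ k ∈ Finset.univ.erase j, ε k / (p j - p k)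

/-- A configuration is balanced if all forces vanish. -/
def IsBalancedConfig {ι : Type*} [Fintype ι] [DecidableEq ι] (p ε : ι → ℂ) : Prop :=
  ∀ j, force p ε j = 0

/-!
Put charge `q` at the origin and charge `e` at the vertices `p m = r ζ ^ m` of a regular `k`-gon.
The force at the origin is `-(e / r) ∑ ζ⁻ᵐ = 0`. At `p m`, `conj (p m) = r² / p m`, and rotating
by `ζ ^ m` turns `∑_{j ≠ m} 1 / (p m - p j)` into `(1 / p m) ∑_{j ≠ 0} 1 / (1 - ζ ^ j)`, which is
`(k - 1) / (2 p m)` because `1 / (1 - z) + 1 / (1 - z⁻¹) = 1` pairs `j` with `-j`. So the force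
at `p m` is `(r² + q + e (k - 1) / 2) / p m`, which vanishes for `q = 1`, `e = -1` and
`r² = (k - 3) / 2`.
-/

theorem inv_one_sub_add_inv_one_sub_inv {K : Type*} [Field K] {z : K} (hz0 : z ≠ 0)
    (hz1 : z ≠ 1) : (1 - z)⁻¹ + (1 - z⁻¹)⁻¹ = 1 := by
  have h : 1 - z ≠ 0 := sub_ne_zero.mpr hz1.symm
  have h' : z - 1 ≠ 0 := sub_ne_zero.mpr hz1
  rw [show 1 - z⁻¹ = (z - 1) / z by field_simp, inv_div]
  field_simp
  ring

theorem pow_val_add_of_pow_eq_one {M : Type*} [Monoid M] {ζ : M} {k : ℕ} (hζ : ζ ^ k = 1)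
    (a b : Fin k) : ζ ^ ((a + b : Fin k) : ℕ) = ζ ^ (a : ℕ) * ζ ^ (b : ℕ) := by
  rw [Fin.val_add, ← pow_eq_pow_mod _ hζ, pow_add]

theorem pow_val_neg_of_pow_eq_one {M : Type*} [DivisionMonoid M] {ζ : M} {k : ℕ} [NeZero k]
    (hζ : ζ ^ k = 1) (a : Fin k) : ζ ^ ((-a : Fin k) : ℕ) = (ζ ^ (a : ℕ))⁻¹ :=
  eq_inv_of_mul_eq_one_left <| by
    rw [← pow_val_add_of_pow_eq_one hζ, neg_add_cancel, Fin.val_zero, pow_zero]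

-- The `j = 0` term is `(1 - 1)⁻¹ = 0` in Lean; the others pair off as `j ↔ -j`.
theorem IsPrimitiveRoot.two_mul_sum_inv_one_sub_pow {K : Type*} [Field K] {ζ : K} {k : ℕ}
    [NeZero k] (hζ : IsPrimitiveRoot ζ k) :
    2 * ∑ j : Fin k, (1 - ζ ^ (j : ℕ))⁻¹ = k - 1 := by
  have hpair (j : Fin k) :
      (1 - ζ ^ (j : ℕ))⁻¹ + (1 - ζ ^ ((-j : Fin k) : ℕ))⁻¹ = 1 - if j = 0 then 1 else 0 := by
    rcases eq_or_ne j 0 with rfl | hj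
    · simp
    rw [if_neg hj, sub_zero, pow_val_neg_of_pow_eq_one hζ.pow_eq_one]
    exact inv_one_sub_add_inv_one_sub_inv (pow_ne_zero _ (hζ.ne_zero (NeZero.ne k)))
      (hζ.pow_ne_one_of_pos_of_lt (Fin.val_ne_zero_iff.mpr hj) j.isLt)
  calc 2 * ∑ j : Fin k, (1 - ζ ^ (j : ℕ))⁻¹
      = ∑ j : Fin k, (1 - ζ ^ (j : ℕ))⁻¹ + ∑ j : Fin k, (1 - ζ ^ ((-j : Fin k) : ℕ))⁻¹ := by
        rw [two_mul]
        congr 1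
        exact (Equiv.sum_comp (Equiv.neg (Fin k)) _).symm
    _ = k - 1 := by simp [← Finset.sum_add_distrib, hpair]

theorem sum_inv_mul_pow_sub_mul_pow {K : Type*} [Field K] {ζ : K} {k : ℕ} [NeZero k]
    (hζ : ζ ^ k = 1) (a : K) (m : Fin k) :
    ∑ j : Fin k, (a * ζ ^ (m : ℕ) - a * ζ ^ (j : ℕ))⁻¹ =
      (a * ζ ^ (m : ℕ))⁻¹ * ∑ j : Fin k, (1 - ζ ^ (j : ℕ))⁻¹ := by
  rw [← Equiv.sum_comp (Equiv.addLeft m), Finset.mul_sum]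
  refine Finset.sum_congr rfl fun j _ => ?_
  rw [Equiv.coe_addLeft, pow_val_add_of_pow_eq_one hζ, ← mul_inv]
  ring_nf

-- The diagonal term `ε j / (p j - p j)` is `ε j / 0 = 0` in Lean.
theorem force_eq_sum_univ {ι : Type*} [Fintype ι] [DecidableEq ι] (p ε : ι → ℂ) (j : ι) :
    force p ε j = (starRingEnd ℂ) (p j) + ∑ k, ε k / (p j - p k) := by
  rw [force, Finset.sum_erase _ (by rw [sub_self, div_zero])]

section CentredPolygon

def centredPolygon (r : ℝ) (ζ : ℂ) (k : ℕ) (i : Option (Fin k)) : ℂ :=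
  i.elim 0 fun m => (r : ℂ) * ζ ^ (m : ℕ)

def centredCharges {k : ℕ} (q e : ℂ) (i : Option (Fin k)) : ℂ :=
  i.elim q fun _ => e

variable {r : ℝ} {ζ : ℂ} {k : ℕ} {q e : ℂ}

theorem force_centredPolygon_none (hζ : IsPrimitiveRoot ζ k) (hk : 1 < k) :
    force (centredPolygon r ζ k) (centredCharges q e) none = 0 := by
  rw [force_eq_sum_univ, Fintype.sum_option]
  simp only [centredPolygon, centredCharges, Option.elim_none, Option.elim_some, map_zero,
    sub_self, div_zero, zero_sub, div_neg, div_mul_eq_div_div, div_eq_mul_inv (e / _),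
    ← inv_pow, Finset.sum_neg_distrib, ← Finset.mul_sum]
  rw [Fin.sum_univ_eq_sum_range (ζ⁻¹ ^ ·), hζ.inv.geom_sum_eq_zero hk]
  simp

theorem force_centredPolygon_some (hζ : IsPrimitiveRoot ζ k) (m : Fin k) :
    force (centredPolygon r ζ k) (centredCharges q e) (some m) =
      (r ^ 2 + q + e * (k - 1) / 2) / (r * ζ ^ (m : ℕ)) := by
  rw [force_eq_sum_univ, Fintype.sum_option]
  have : NeZero k := NeZero.of_pos m.pos
  simp only [centredPolygon, centredCharges, Option.elim_none, Option.elim_some, sub_zero,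
    div_eq_mul_inv, ← Finset.mul_sum]
  have hζm : ‖ζ ^ (m : ℕ)‖ = 1 := by
    rw [norm_pow, hζ.norm'_eq_one (NeZero.ne k), one_pow]
  have hS := hζ.two_mul_sum_inv_one_sub_pow
  rw [map_mul, Complex.conj_ofReal, ← Complex.inv_eq_conj hζm,
    sum_inv_mul_pow_sub_mul_pow hζ.pow_eq_one, ← hS]
  rcases eq_or_ne (r : ℂ) 0 with hr | hr
  · simp [hr]
  have hζm0 : ζ ^ (m : ℕ) ≠ 0 := norm_ne_zero_iff.mp (hζm.symm ▸ one_ne_zero)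
  field_simp
  ring

theorem isBalancedConfig_centredPolygon (hζ : IsPrimitiveRoot ζ k) (hk : 1 < k)
    (hr : (r : ℂ) ^ 2 + q + e * (k - 1) / 2 = 0) :
    IsBalancedConfig (centredPolygon r ζ k) (centredCharges q e) := by
  rintro (_ | m)
  · exact force_centredPolygon_none hζ hk
  · rw [force_centredPolygon_some hζ, hr, zero_div]

end CentredPolygon

/-- (Twisted Fischer–Koch, positive center) For `k ≥ 4`, the configuration of the origin
with charge `+1` together with the `k` points `√((k-3)/2) · e^{2πim/k}`, `m = 0, …, k-1`,
each with charge `-1`, is balanced.  (The index `none` is the origin.) -/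
theorem fischerKoch_pos_center_balanced (k : ℕ) (hk : 4 ≤ k) :
    IsBalancedConfig
      (fun i : Option (Fin k) =>
        match i with
        | none => 0
        | some m =>
            (Real.sqrt (((k : ℝ) - 3) / 2) : ℂ) *
              Complex.exp (2 * Real.pi * Complex.I / k) ^ (m : ℕ))
      (fun i : Option (Fin k) =>
        match i with
        | none => 1
        | some _ => -1) := by
  have hradius : (√(((k : ℝ) - 3) / 2) : ℂ) ^ 2 + 1 + -1 * (k - 1) / 2 = 0 := by
    rw [← Complex.ofReal_pow, Real.sq_sqrt (by rify at hk; linarith)]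
    push_cast
    ring
  have hbalanced := isBalancedConfig_centredPolygon (k := k) (q := 1) (e := -1)
    (Complex.isPrimitiveRoot_exp k (by omega)) (by omega) hradius
  convert hbalanced using 1 <;> funext i <;> cases i <;> rfl
end

section
/- (Exotic CHM configurations, one positive orbit) Let k ≥ 2 be an integer and ε₀ ∈ {−1, 0}, or k ≥ 4 and ε₀ = 1. Let φ = e^{2πi/k}. Then there exist real numbers p, q > 0 such that the configuration whose points are p·φ^m with charge +1 (m = 0, …, k−1) and q·e^{iπ/k}·φ^m with charge −1 (m = 0, …, k−1), together with the origin with charge ε₀ when ε₀ ≠ 0, is balanced. -/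
open Finset Polynomial ComplexConjugate

section RootsOfUnity

variable {M β : Type*} [DivisionMonoid M] [AddCommMonoid β] {k : ℕ} {ζ : M}

theorem pow_fin_val_add (hζ : ζ ^ k = 1) (a b : Fin k) :
    ζ ^ ((a + b : Fin k) : ℕ) = ζ ^ (a : ℕ) * ζ ^ (b : ℕ) := by
  rw [Fin.val_add, ← pow_eq_pow_mod _ hζ, pow_add]

theorem pow_fin_val_neg [NeZero k] (hζ : ζ ^ k = 1) (a : Fin k) :
    ζ ^ ((-a : Fin k) : ℕ) = (ζ ^ (a : ℕ))⁻¹ :=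
  eq_inv_of_mul_eq_one_left <| by
    rw [← pow_fin_val_add hζ, neg_add_cancel, Fin.val_zero, pow_zero]

theorem sum_fin_pow_mul_left [NeZero k] (hζ : ζ ^ k = 1) (f : M → β) (a : Fin k) :
    ∑ m : Fin k, f (ζ ^ (a : ℕ) * ζ ^ (m : ℕ)) = ∑ m : Fin k, f (ζ ^ (m : ℕ)) :=
  Fintype.sum_equiv (Equiv.addLeft a) _ _ fun m => by simp [pow_fin_val_add hζ]

theorem sum_fin_pow_inv [NeZero k] (hζ : ζ ^ k = 1) (f : M → β) :
    ∑ m : Fin k, f (ζ ^ (m : ℕ))⁻¹ = ∑ m : Fin k, f (ζ ^ (m : ℕ)) :=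
  Fintype.sum_equiv (Equiv.neg _) _ _ fun m => by simp [pow_fin_val_neg hζ]

end RootsOfUnity

namespace IsPrimitiveRoot

variable {K : Type*} [Field K] {k : ℕ} {ζ : K}

theorem sum_fin_inv_pow_eq_zero (hζ : IsPrimitiveRoot ζ k) (hk : 1 < k) :
    ∑ m : Fin k, (ζ ^ (m : ℕ))⁻¹ = 0 := by
  simp_rw [← inv_pow]
  rw [Fin.sum_univ_eq_sum_range (ζ⁻¹ ^ ·), hζ.inv.geom_sum_eq_zero hk]

/-- `z` times the logarithmic derivative of `X ^ k - w ^ k = ∏ m, (X - w * ζ ^ m)` at `z`. -/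
theorem mul_sum_inv_sub_mul_pow (hζ : IsPrimitiveRoot ζ k) {z w : K} (h : z ^ k ≠ w ^ k) :
    z * ∑ m : Fin k, (z - w * ζ ^ (m : ℕ))⁻¹ = k * z ^ k / (z ^ k - w ^ k) := by
  have hk : k ≠ 0 := by rintro rfl; exact h (by simp)
  have hsplit := X_pow_sub_C_splits_of_isPrimitiveRoot hζ (rfl : w ^ k = w ^ k)
  have heval : (X ^ k - C (w ^ k)).eval z ≠ 0 := by simpa [sub_eq_zero] using h
  have hlog := hsplit.eval_derivative_div_eval_of_ne_zero heval
  rw [← nthRoots, hζ.nthRoots_eq rfl, Multiset.map_map] at hlog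
  simp only [derivative_sub, derivative_X_pow, derivative_C, sub_zero, eval_mul, eval_C, eval_pow,
    eval_X, eval_sub] at hlog
  rw [Fin.sum_univ_eq_sum_range (fun m => (z - w * ζ ^ m)⁻¹), Finset.sum_eq_multiset_sum,
    Finset.range_val]
  simp only [Function.comp_def, one_div, mul_comm _ w] at hlog
  rw [← hlog, mul_div_assoc', mul_left_comm, mul_pow_sub_one hk]

theorem sum_inv_one_sub_pow [NeZero k] [NeZero (2 : K)] (hζ : IsPrimitiveRoot ζ k) :
    ∑ m : Fin k, (1 - ζ ^ (m : ℕ))⁻¹ = (k - 1) / 2 := by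
  -- pair the terms at `u` and `u⁻¹`: `(1 - u)⁻¹ + (1 - u⁻¹)⁻¹ = 1` for `u ≠ 1`, while the
  -- term at `u = 1` is the junk value `0⁻¹ = 0`
  have hpair (m : Fin k) :
      (1 - ζ ^ (m : ℕ))⁻¹ + (1 - (ζ ^ (m : ℕ))⁻¹)⁻¹ = if m = 0 then 0 else 1 := by
    split_ifs with hm
    · simp [hm]
    have hne : ζ ^ (m : ℕ) ≠ 1 := hζ.pow_ne_one_of_pos_of_lt (Fin.val_ne_zero_iff.mpr hm) m.isLt
    have h0 : ζ ^ (m : ℕ) ≠ 0 := pow_ne_zero _ (hζ.ne_zero (NeZero.ne k))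
    have h1 : 1 - ζ ^ (m : ℕ) ≠ 0 := sub_ne_zero.mpr hne.symm
    have h1' : ζ ^ (m : ℕ) - 1 ≠ 0 := sub_ne_zero.mpr hne
    field_simp
    ring
  have htwice : 2 * ∑ m : Fin k, (1 - ζ ^ (m : ℕ))⁻¹ = k - 1 := by
    calc 2 * ∑ m : Fin k, (1 - ζ ^ (m : ℕ))⁻¹
        = ∑ m : Fin k, ((1 - ζ ^ (m : ℕ))⁻¹ + (1 - (ζ ^ (m : ℕ))⁻¹)⁻¹) := by
          rw [sum_add_distrib, sum_fin_pow_inv hζ.pow_eq_one fun u => (1 - u)⁻¹]; ring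
      _ = k - 1 := by
          simp only [hpair, sum_ite, sum_const_zero, sum_const, nsmul_one, zero_add,
            filter_ne', card_erase_of_mem (mem_univ _), card_univ, Fintype.card_fin,
            Nat.cast_pred (NeZero.pos k)]
  rw [← htwice, mul_div_cancel_left₀ _ (NeZero.ne 2)]

theorem mul_sum_inv_sub_mul_pow_self [NeZero k] [NeZero (2 : K)] (hζ : IsPrimitiveRoot ζ k)
    {c : K} (hc : c ≠ 0) (a : Fin k) :
    c * ζ ^ (a : ℕ) * ∑ m : Fin k, (c * ζ ^ (a : ℕ) - c * ζ ^ (m : ℕ))⁻¹ = (k - 1) / 2 := by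
  have hz : c * ζ ^ (a : ℕ) ≠ 0 := mul_ne_zero hc (pow_ne_zero _ (hζ.ne_zero (NeZero.ne k)))
  rw [← sum_fin_pow_mul_left hζ.pow_eq_one (fun u => (c * ζ ^ (a : ℕ) - c * u)⁻¹) a, mul_sum]
  refine (sum_congr rfl fun m _ => ?_).trans hζ.sum_inv_one_sub_pow
  rw [← mul_assoc c, ← mul_one_sub, mul_inv, ← mul_assoc, mul_inv_cancel₀ hz, one_mul]

end IsPrimitiveRoot

theorem Complex.exp_pi_mul_I_div_pow {k : ℕ} (hk : k ≠ 0) :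
    Complex.exp (Real.pi * Complex.I / k) ^ k = -1 := by
  rw [← Complex.exp_nat_mul, mul_div_cancel₀ _ (Nat.cast_ne_zero.mpr hk), Complex.exp_pi_mul_I]

theorem mul_conj_ofReal_mul {r : ℝ} {u : ℂ} (hu : ‖u‖ = 1) : r * u * conj (r * u) = r ^ 2 := by
  rw [Complex.mul_conj', norm_mul, hu, mul_one, Complex.norm_real, Real.norm_eq_abs,
    ← Complex.ofReal_pow, sq_abs, Complex.ofReal_pow]

theorem exists_chm_radii {k : ℕ} (hk : k ≠ 0) {e : ℝ} (he : 2 * e < k - 1) :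
    ∃ p q : ℝ, 0 < p ∧ 0 < q ∧
      p ^ 2 + (k - 1) / 2 - k * p ^ k / (p ^ k + q ^ k) + e = 0 ∧
      q ^ 2 - (k - 1) / 2 + k * q ^ k / (p ^ k + q ^ k) + e = 0 := by
  set G : ℝ → ℝ := fun s => k * √(s + 1) ^ k / (√(s + 1) ^ k + √s ^ k) - s - (k + 1) / 2 - e
  have hden {s : ℝ} (hs : 0 ≤ s) : 0 < √(s + 1) ^ k + √s ^ k := by
    have : 0 < √(s + 1) := Real.sqrt_pos.mpr (by linarith)
    positivity
  have hT : 0 ≤ (k : ℝ) - e := by linarith [(Nat.cast_nonneg k : (0 : ℝ) ≤ k)]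
  have hcont : ContinuousOn G (Set.Icc 0 (k - e)) :=
    ((continuousOn_const.mul (by fun_prop)).div (by fun_prop) fun s hs => (hden hs.1).ne').sub
      (by fun_prop) |>.sub continuousOn_const |>.sub continuousOn_const
  have hG0 : 0 < G 0 := by
    simp only [G, zero_add, Real.sqrt_one, one_pow, mul_one, Real.sqrt_zero, zero_pow hk, add_zero,
      div_one]
    linarith
  have hGT : G (k - e) < 0 := by
    have : k * √(k - e + 1) ^ k / (√(k - e + 1) ^ k + √(k - e) ^ k) ≤ k := by
      rw [div_le_iff₀ (hden hT)]
      nlinarith [pow_nonneg (Real.sqrt_nonneg ((k : ℝ) - e)) k, (Nat.cast_nonneg k : (0 : ℝ) ≤ k)]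
    simp only [G]
    linarith
  obtain ⟨s, hs, hGs⟩ := intermediate_value_Icc' hT hcont ⟨hGT.le, hG0.le⟩
  have hs0 : 0 < s := lt_of_le_of_ne hs.1 (by rintro rfl; exact hG0.ne' hGs)
  have hD := hden hs.1
  have hfrac_sum :
      k * √(s + 1) ^ k / (√(s + 1) ^ k + √s ^ k) + k * √s ^ k / (√(s + 1) ^ k + √s ^ k) = k := by
    field_simp
  simp only [G] at hGs
  refine ⟨√(s + 1), √s, Real.sqrt_pos.mpr (by linarith), Real.sqrt_pos.mpr hs0, ?_, ?_⟩
  · rw [Real.sq_sqrt (by linarith)]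
    linarith
  · rw [Real.sq_sqrt hs.1]
    linarith

theorem force_eq_sum {ι : Type*} [Fintype ι] [DecidableEq ι] (p ε : ι → ℂ) (j : ι) :
    force p ε j = conj (p j) + ∑ i, ε i / (p j - p i) := by
  -- the added term `i = j` is `ε j / 0 = 0`
  rw [force, sum_erase _ (by simp)]

section CHM

def chmPosition (k : ℕ) (ζ ψ : ℂ) (p q : ℝ) : (Fin k ⊕ Fin k) ⊕ Unit → ℂ :=
  Sum.elim (Sum.elim (fun m => p * ζ ^ (m : ℕ)) fun m => q * ψ * ζ ^ (m : ℕ)) fun _ => 0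

def chmCharge (k : ℕ) (ε₀ : ℂ) : (Fin k ⊕ Fin k) ⊕ Unit → ℂ :=
  Sum.elim (Sum.elim (fun _ => 1) fun _ => -1) fun _ => ε₀

variable {k : ℕ} {ζ ψ : ℂ} {p q : ℝ} {ε₀ : ℂ}

theorem force_chm (j : (Fin k ⊕ Fin k) ⊕ Unit) :
    force (chmPosition k ζ ψ p q) (chmCharge k ε₀) j =
      conj (chmPosition k ζ ψ p q j)
        + ∑ m : Fin k, (chmPosition k ζ ψ p q j - p * ζ ^ (m : ℕ))⁻¹
        - ∑ m : Fin k, (chmPosition k ζ ψ p q j - q * ψ * ζ ^ (m : ℕ))⁻¹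
        + ε₀ / chmPosition k ζ ψ p q j := by
  rw [force_eq_sum, Fintype.sum_sum_type, Fintype.sum_sum_type,
    Fintype.sum_unique (ι := Unit)]
  simp only [chmPosition, chmCharge, Sum.elim_inl, Sum.elim_inr, one_div, neg_div, sum_neg_distrib,
    sub_zero]
  ring

theorem force_chm_inl_inl [NeZero k] (hζ : IsPrimitiveRoot ζ k) (hψ : ψ ^ k = -1) (hp : 0 < p)
    (hq : 0 < q) (m : Fin k) :
    force (chmPosition k ζ ψ p q) (chmCharge k ε₀) (.inl (.inl m)) =
      (p ^ 2 + (k - 1) / 2 - k * p ^ k / (p ^ k + q ^ k) + ε₀) / (p * ζ ^ (m : ℕ)) := by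
  have hζm : (ζ ^ (m : ℕ)) ^ k = 1 := by rw [pow_right_comm, hζ.pow_eq_one, one_pow]
  have hp0 : (p : ℂ) ≠ 0 := Complex.ofReal_ne_zero.mpr hp.ne'
  have hz : (p : ℂ) * ζ ^ (m : ℕ) ≠ 0 :=
    mul_ne_zero hp0 (pow_ne_zero _ (hζ.ne_zero (NeZero.ne k)))
  have hD : (p : ℂ) ^ k + q ^ k ≠ 0 := by
    exact_mod_cast (by positivity : (0 : ℝ) < p ^ k + q ^ k).ne'
  have hzk : ((p : ℂ) * ζ ^ (m : ℕ)) ^ k = p ^ k := by rw [mul_pow, hζm, mul_one]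
  have hwk : ((q : ℂ) * ψ) ^ k = -q ^ k := by rw [mul_pow, hψ, mul_neg_one]
  have hconj : (p : ℂ) * ζ ^ (m : ℕ) * conj ((p : ℂ) * ζ ^ (m : ℕ)) = p ^ 2 :=
    mul_conj_ofReal_mul (by rw [norm_pow, hζ.norm'_eq_one (NeZero.ne k), one_pow])
  have hself := hζ.mul_sum_inv_sub_mul_pow_self hp0 m
  have hcross := hζ.mul_sum_inv_sub_mul_pow (z := (p : ℂ) * ζ ^ (m : ℕ)) (w := q * ψ)
    (by rw [hzk, hwk]; contrapose! hD; rw [hD]; ring)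
  rw [hzk, hwk, sub_neg_eq_add] at hcross
  rw [force_chm, eq_div_iff hz]
  simp only [chmPosition, Sum.elim_inl]
  linear_combination hconj + hself - hcross + div_mul_cancel₀ ε₀ hz

theorem force_chm_inl_inr [NeZero k] (hζ : IsPrimitiveRoot ζ k) (hψ : ψ ^ k = -1) (hp : 0 < p)
    (hq : 0 < q) (m : Fin k) :
    force (chmPosition k ζ ψ p q) (chmCharge k ε₀) (.inl (.inr m)) =
      (q ^ 2 - (k - 1) / 2 + k * q ^ k / (p ^ k + q ^ k) + ε₀) / (q * ψ * ζ ^ (m : ℕ)) := by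
  have hζm : (ζ ^ (m : ℕ)) ^ k = 1 := by rw [pow_right_comm, hζ.pow_eq_one, one_pow]
  have hψ0 : ψ ≠ 0 := by rintro rfl; simp [zero_pow (NeZero.ne k)] at hψ
  have hc : (q : ℂ) * ψ ≠ 0 := mul_ne_zero (Complex.ofReal_ne_zero.mpr hq.ne') hψ0
  have hz : (q : ℂ) * ψ * ζ ^ (m : ℕ) ≠ 0 :=
    mul_ne_zero hc (pow_ne_zero _ (hζ.ne_zero (NeZero.ne k)))
  have hD : (p : ℂ) ^ k + q ^ k ≠ 0 := by
    exact_mod_cast (by positivity : (0 : ℝ) < p ^ k + q ^ k).ne'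
  have hzk : ((q : ℂ) * ψ * ζ ^ (m : ℕ)) ^ k = -q ^ k := by rw [mul_pow, mul_pow, hψ, hζm]; ring
  have hψn : ‖ψ‖ = 1 :=
    Complex.norm_eq_one_of_pow_eq_one (n := k * 2) (by rw [pow_mul, hψ, neg_one_sq])
      (mul_ne_zero (NeZero.ne k) two_ne_zero)
  have hconj : (q : ℂ) * ψ * ζ ^ (m : ℕ) * conj ((q : ℂ) * ψ * ζ ^ (m : ℕ)) = q ^ 2 := by
    rw [mul_assoc (q : ℂ)]
    exact mul_conj_ofReal_mul
      (by rw [norm_mul, norm_pow, hψn, hζ.norm'_eq_one (NeZero.ne k), one_pow, one_mul])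
  have hself := hζ.mul_sum_inv_sub_mul_pow_self hc m
  have hcross := hζ.mul_sum_inv_sub_mul_pow (z := (q : ℂ) * ψ * ζ ^ (m : ℕ)) (w := p)
    (by rw [hzk]; contrapose! hD; rw [← hD]; ring)
  rw [hzk, show -(q : ℂ) ^ k - p ^ k = -(p ^ k + q ^ k) by ring, mul_neg, neg_div_neg_eq] at hcross
  rw [force_chm, eq_div_iff hz]
  simp only [chmPosition, Sum.elim_inl, Sum.elim_inr]
  linear_combination hconj + hcross - hself + div_mul_cancel₀ ε₀ hz

theorem force_chm_inr (hζ : IsPrimitiveRoot ζ k) (hk : 1 < k) :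
    force (chmPosition k ζ ψ p q) (chmCharge k ε₀) (.inr ()) = 0 := by
  have hsum (c : ℂ) : ∑ m : Fin k, (0 - c * ζ ^ (m : ℕ))⁻¹ = 0 := by
    simp only [zero_sub, inv_neg, mul_inv, ← mul_sum, hζ.sum_fin_inv_pow_eq_zero hk,
      sum_neg_distrib, mul_zero, neg_zero]
  rw [force_chm]
  simp only [chmPosition, Sum.elim_inr, hsum]
  simp

theorem force_chm_eq_zero [NeZero k] (hζ : IsPrimitiveRoot ζ k) (hψ : ψ ^ k = -1) (hk : 1 < k)
    (hp : 0 < p) (hq : 0 < q)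
    (hpos : p ^ 2 + (k - 1) / 2 - k * p ^ k / (p ^ k + q ^ k) + ε₀ = 0)
    (hneg : q ^ 2 - (k - 1) / 2 + k * q ^ k / (p ^ k + q ^ k) + ε₀ = 0)
    (j : (Fin k ⊕ Fin k) ⊕ Unit) :
    force (chmPosition k ζ ψ p q) (chmCharge k ε₀) j = 0 := by
  rcases j with (m | m) | ⟨⟩
  · rw [force_chm_inl_inl hζ hψ hp hq, hpos, zero_div]
  · rw [force_chm_inl_inr hζ hψ hp hq, hneg, zero_div]
  · exact force_chm_inr hζ hk

end CHM

/-- (Exotic CHM configurations, one positive orbit) Suppose `k ≥ 2` and `ε₀ ∈ {-1, 0}`,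
or `k ≥ 4` and `ε₀ = 1`.  Then there exist reals `p, q > 0` such that the configuration
of points `p · φ^m` with charge `+1`, `q · e^{iπ/k} · φ^m` with charge `-1`
(`φ = e^{2πi/k}`, `m = 0, …, k-1`), together with the origin with charge `ε₀` when
`ε₀ ≠ 0`, is balanced: the force vanishes at every orbit point, and at the origin
whenever the origin belongs to the configuration (when `ε₀ = 0` the origin carries
charge `0` and does not affect the other forces). -/
theorem exotic_CHM_one_orbit_balanced (k : ℕ) (ε₀ : ℂ)
    (hcase : (2 ≤ k ∧ (ε₀ = -1 ∨ ε₀ = 0)) ∨ (4 ≤ k ∧ ε₀ = 1)) :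
    ∃ p q : ℝ, 0 < p ∧ 0 < q ∧
      ((∀ j : (Fin k ⊕ Fin k),
          force
            (fun i : (Fin k ⊕ Fin k) ⊕ Unit =>
              match i with
              | Sum.inl (Sum.inl m) =>
                  (p : ℂ) * Complex.exp (2 * Real.pi * Complex.I / k) ^ (m : ℕ)
              | Sum.inl (Sum.inr m) =>
                  (q : ℂ) * Complex.exp (Real.pi * Complex.I / k) *
                    Complex.exp (2 * Real.pi * Complex.I / k) ^ (m : ℕ)
              | Sum.inr _ => 0)
            (fun i =>
              match i with
              | Sum.inl (Sum.inl _) => 1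
              | Sum.inl (Sum.inr _) => -1
              | Sum.inr _ => ε₀)
            (Sum.inl j) = 0) ∧
        (ε₀ ≠ 0 →
          force
            (fun i : (Fin k ⊕ Fin k) ⊕ Unit =>
              match i with
              | Sum.inl (Sum.inl m) =>
                  (p : ℂ) * Complex.exp (2 * Real.pi * Complex.I / k) ^ (m : ℕ)
              | Sum.inl (Sum.inr m) =>
                  (q : ℂ) * Complex.exp (Real.pi * Complex.I / k) *
                    Complex.exp (2 * Real.pi * Complex.I / k) ^ (m : ℕ)
              | Sum.inr _ => 0)
            (fun i =>
              match i with
              | Sum.inl (Sum.inl _) => 1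
              | Sum.inl (Sum.inr _) => -1
              | Sum.inr _ => ε₀)
            (Sum.inr ()) = 0)) := by
  obtain ⟨hk, e, rfl, he⟩ : 2 ≤ k ∧ ∃ e : ℝ, ε₀ = e ∧ 2 * e < k - 1 := by
    rcases hcase with ⟨hk, rfl | rfl⟩ | ⟨hk, rfl⟩
    · exact ⟨hk, -1, by simp, by linarith [(Nat.ofNat_le_cast.mpr hk : (2 : ℝ) ≤ k)]⟩
    · exact ⟨hk, 0, by simp, by linarith [(Nat.ofNat_le_cast.mpr hk : (2 : ℝ) ≤ k)]⟩
    · exact ⟨by omega, 1, by simp, by linarith [(Nat.ofNat_le_cast.mpr hk : (4 : ℝ) ≤ k)]⟩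
  have : NeZero k := ⟨by omega⟩
  obtain ⟨p, q, hp, hq, hpos, hneg⟩ := exists_chm_radii (NeZero.ne k) he
  have hbal := force_chm_eq_zero (ε₀ := e) (Complex.isPrimitiveRoot_exp k (NeZero.ne k))
    (Complex.exp_pi_mul_I_div_pow (NeZero.ne k)) (by omega) hp hq
    (by exact_mod_cast hpos) (by exact_mod_cast hneg)
  refine ⟨p, q, hp, hq, fun j => ?_, fun _ => ?_⟩ <;> convert hbal _ using 2 <;>
    funext i <;> rcases i with (_ | _) | _ <;> rfl
end
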